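/- Let Q be the poset Q = ℕ ∪ {a_n : n ∈ ℕ} ∪ {ω, a} ordered by: the usual order on ℕ; n ≤ ω for all n ∈ ℕ; a ≤ a_n for all n; n ≤ a_m whenever n ≤ m. Equip Q with the topology τ_Q = {U Scott open : {a_n : n ∈ ℕ} \ U finite} ∪ {∅}. Then (Q, τ_Q) is not a strong d-space: the set ℕ is directed, ⋂_{n∈ℕ} ↑n ∩ ↑a = ∅, yet ↑n ∩ ↑a ≠ ∅ for every n ∈ ℕ. -/
import Mathlib


open Set

/-- The poset `Q = ℕ ∪ {aₙ : n ∈ ℕ} ∪ {ω, a}` from Example 3.5 (Fig. 3). -/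
inductive Qel where
  | nat (n : ℕ)
  | an (n : ℕ)
  | omega
  | a
deriving DecidableEq

namespace Qel

/-- The order on `Q`: the usual order on ℕ; `n ≤ ω`; `a ≤ aₙ`;
`n ≤ a_m` whenever `n ≤ m`. -/
def le : Qel → Qel → Prop
  | nat m, nat n => m ≤ n
  | nat _, omega => True
  | nat m, an n => m ≤ n
  | omega, omega => True
  | a, a => True
  | a, an _ => True
  | an m, an n => m = n
  | _, _ => False

instance : PartialOrder Qel where
  le := le
  le_refl x := by cases x <;> simp [le]
  le_trans x y z hxy hyz := by
    cases x <;> cases y <;> cases z <;> simp_all [le] <;> omega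
  le_antisymm x y hxy hyx := by
    cases x <;> cases y <;> simp_all [le] <;> omega

/-- A subset of a poset is Scott open if it is an upper set and every directed set
whose supremum lies in it meets it. -/
def ScottOpen (U : Set Qel) : Prop :=
  (∀ x y : Qel, x ≤ y → x ∈ U → y ∈ U) ∧
    ∀ D : Set Qel, D.Nonempty → DirectedOn (· ≤ ·) D →
      ∀ s : Qel, IsLUB D s → s ∈ U → (D ∩ U).Nonempty

/-- `(Q, τ_Q)` is not a strong d-space: the set `ℕ` is directed,
`⋂ₙ ↑n ∩ ↑a = ∅`, yet `↑n ∩ ↑a ≠ ∅` for every `n`. -/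
theorem Q_not_strong_d (τ : TopologicalSpace Qel)
    (hτ : ∀ U : Set Qel, τ.IsOpen U ↔ U = ∅ ∨
      (ScottOpen U ∧ (Set.range an \ U).Finite)) :
    (¬ ∀ D : Set Qel, D.Nonempty → DirectedOn (· ≤ ·) D → ∀ (x : Qel) (U : Set Qel),
        τ.IsOpen U → (⋂ d ∈ D, Ici d) ∩ Ici x ⊆ U → ∃ d ∈ D, Ici d ∩ Ici x ⊆ U) ∧
      DirectedOn (· ≤ ·) (Set.range nat) ∧
      (⋂ n : ℕ, Ici (nat n)) ∩ Ici a = ∅ ∧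
      ∀ n : ℕ, (Ici (nat n) ∩ Ici a).Nonempty := by
  have hIci : ∀ n : ℕ, an n ∈ Ici (nat n) ∩ Ici a := by
    intro n
    exact ⟨show le (nat n) (an n) from le_refl n, show le a (an n) from trivial⟩
  have hdir : DirectedOn (· ≤ ·) (Set.range nat) := by
    rintro x ⟨m, rfl⟩ y ⟨n, rfl⟩
    exact ⟨nat (max m n), mem_range_self _,
      show le (nat m) (nat (max m n)) from Nat.le_max_left m n,
      show le (nat n) (nat (max m n)) from Nat.le_max_right m n⟩
  have hempty : (⋂ n : ℕ, Ici (nat n)) ∩ Ici a = ∅ := by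
    ext x
    simp only [mem_inter_iff, mem_iInter, mem_Ici, mem_empty_iff_false, iff_false, not_and]
    intro hall ha
    cases x with
    | nat m => exact ha
    | omega => exact ha
    | a => exact hall 0
    | an m => exact absurd (show m + 1 ≤ m from hall (m + 1)) (by omega)
  refine ⟨?_, hdir, hempty, fun n => ⟨an n, hIci n⟩⟩
  intro h
  obtain ⟨d, ⟨n, rfl⟩, hsub⟩ := h (Set.range nat) ⟨nat 0, mem_range_self 0⟩ hdir a ∅
    (by rw [hτ]; left; rfl)
    (by rw [biInter_range, hempty])
  exact hsub (hIci n)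

end Qel
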